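/- Let n be a positive integer and let p be a join-irreducible element in a complete, lower continuous, n-distributive lattice L. Then every finite join-cover of p can be refined to a minimal join-cover of p. -/

import Mathlib

/-- A finite set `E` covers `p` if `p ≤ ⋁E`. -/
def Covers {α : Type*} [CompleteLattice α] (p : α) (E : Finset α) : Prop :=
  p ≤ E.sup id

/-- `X` refines `E`: every element of `X` lies below some element of `E`. -/
def Refines {α : Type*} [CompleteLattice α] (X E : Finset α) : Prop :=
  ∀ x ∈ X, ∃ e ∈ E, x ≤ e

/-- `E` covers `p` minimally: `E` covers `p` and every finite `X` covering `p`
and refining `E` contains `E`. -/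
def MinCovers {α : Type*} [CompleteLattice α] (p : α) (E : Finset α) : Prop :=
  Covers p E ∧ ∀ X : Finset α, Covers p X → Refines X E → E ⊆ X

/-- `L` is lower continuous: `a ⊔ ⋀D = ⋀ {a ⊔ x : x ∈ D}` for every nonempty
downward directed `D`. -/
def LowerContinuous (α : Type*) [CompleteLattice α] : Prop :=
  ∀ (a : α) (D : Set α), D.Nonempty → DirectedOn (· ≥ ·) D →
    a ⊔ sInf D = ⨅ x ∈ D, a ⊔ x

/-!
Irredundant join-covers of `p` are antichains, and by `n`-distributivity and join-irreducibility
they have at most `n` elements. If an irredundant cover `G` is refined by a cover `F` with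
`#F ≤ #G`, every `g ∈ G` needs an element of `F` lying below `g` and below no other element of
`G`, so `≤` matches `F` and `G` bijectively. Along a refinement chain of irredundant covers, take
a member `F₀` of maximal size: the members refining `F₀` are all matched with `F₀`, and the
matched elements decrease along the chain, so lower continuity shows that their meets still
cover `p`. Zorn's lemma then yields an irredundant cover refining `E` that is refined by no
other one, and this is a minimal join-cover.
-/

def NDistributive (n : ℕ) (α : Type*) [CompleteLattice α] : Prop :=
  ∀ (x : α) (y : Fin (n + 1) → α),
    x ⊓ (⨆ i, y i) = ⨆ i : Fin (n + 1), (x ⊓ ⨆ j ∈ ({i}ᶜ : Finset (Fin (n + 1))), y j)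

abbrev IsIrredundantCover {α : Type*} [CompleteLattice α] (p : α) (F : Finset α) : Prop :=
  Minimal (Covers p) F

section CoverTheory

variable {α : Type*} [CompleteLattice α] {p : α} {E F G X : Finset α}

theorem Refines.refl (F : Finset α) : Refines F F := fun x hx => ⟨x, hx, le_rfl⟩

theorem Refines.trans (hFG : Refines F G) (hGE : Refines G E) : Refines F E := by
  intro x hx
  obtain ⟨g, hg, hxg⟩ := hFG x hx
  obtain ⟨e, he, hge⟩ := hGE g hg
  exact ⟨e, he, hxg.trans hge⟩

theorem Refines.of_subset (h : F ⊆ G) : Refines F G := fun x hx => ⟨x, h hx, le_rfl⟩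

theorem Refines.subset_of_isAntichain (hFX : Refines F X) (hXF : Refines X F)
    (hF : IsAntichain (· ≤ ·) (F : Set α)) : F ⊆ X := by
  intro f hf
  obtain ⟨x, hx, hfx⟩ := hFX f hf
  obtain ⟨f', hf', hxf'⟩ := hXF x hx
  have hff' : f = f' := hF.eq hf hf' (hfx.trans hxf')
  rwa [le_antisymm (hff' ▸ hxf') hfx] at hx

theorem Covers.of_refines (hX : Covers p X) (hXE : Refines X E) : Covers p E :=
  hX.trans <| Finset.sup_le fun x hx =>
    let ⟨_, he, hxe⟩ := hXE x hx
    hxe.trans (Finset.le_sup (f := id) he)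

theorem Covers.exists_isIrredundantCover_subset (hE : Covers p E) :
    ∃ F ⊆ E, IsIrredundantCover p F :=
  exists_minimal_le_of_wellFoundedLT (Covers p) E hE

theorem IsIrredundantCover.not_covers_erase [DecidableEq α] (hF : IsIrredundantCover p F)
    {f : α} (hf : f ∈ F) : ¬ Covers p (F.erase f) :=
  hF.not_prop_of_lt (Finset.erase_ssubset hf)

theorem IsIrredundantCover.isAntichain (hF : IsIrredundantCover p F) :
    IsAntichain (· ≤ ·) (F : Set α) := by
  classical
  intro f hf f' hf' hne hle
  refine hF.not_covers_erase hf (hF.prop.of_refines fun x hx => ?_)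
  by_cases hxf : x = f
  · exact ⟨f', Finset.mem_erase.2 ⟨Ne.symm hne, hf'⟩, hxf ▸ hle⟩
  · exact ⟨x, Finset.mem_erase.2 ⟨hxf, hx⟩, le_rfl⟩

theorem NDistributive.exists_covers_erase [DecidableEq α] {n : ℕ} (hdist : NDistributive n α)
    (hp : SupIrred p) (hF : Covers p F) (hcard : n < F.card) : ∃ f ∈ F, Covers p (F.erase f) := by
  set e : Fin (n + 1) → α := fun i => F.equivFin.symm (Fin.castLE hcard i)
  have he : Function.Injective e :=
    Subtype.val_injective.comp (F.equivFin.symm.injective.comp (Fin.castLE_injective hcard))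
  -- Split `F` into `n + 1` nonempty blocks, block `i` containing `e i`.
  set g := Function.invFun e
  set y : Fin (n + 1) → α := fun i => (F.filter (g · = i)).sup id
  have hpy : p ≤ ⨆ i, y i := hF.trans <| Finset.sup_le fun f hf =>
    le_iSup_of_le (g f) (Finset.le_sup (f := id) (Finset.mem_filter.2 ⟨hf, rfl⟩))
  obtain ⟨i, -, hi⟩ := hp.finset_sup_eq (s := Finset.univ)
    (f := fun i => p ⊓ ⨆ j ∈ ({i}ᶜ : Finset (Fin (n + 1))), y j)
    (by rw [Finset.sup_univ_eq_iSup, ← hdist, inf_eq_left.2 hpy])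
  refine ⟨e i, (F.equivFin.symm _).2, (inf_eq_left.1 hi).trans <|
    iSup₂_le fun j hj => Finset.sup_le fun x hx => Finset.le_sup (f := id) ?_⟩
  obtain ⟨hxF, rfl⟩ := Finset.mem_filter.1 hx
  refine Finset.mem_erase.2 ⟨fun hxe => ?_, hxF⟩
  rw [Finset.mem_compl, Finset.mem_singleton, hxe] at hj
  exact hj (Function.leftInverse_invFun he i)

theorem IsIrredundantCover.card_le {n : ℕ} (hdist : NDistributive n α) (hp : SupIrred p)
    (hF : IsIrredundantCover p F) : F.card ≤ n := by
  classical
  by_contra! hcard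
  obtain ⟨f, hf, hcov⟩ := hdist.exists_covers_erase hp hF.prop hcard
  exact hF.not_covers_erase hf hcov

section Refinement

variable (hG : IsIrredundantCover p G) (hF : Covers p F) (hFG : Refines F G)
include hG hF hFG

theorem IsIrredundantCover.exists_le_of_refines {g : α} (hg : g ∈ G) :
    ∃ f ∈ F, f ≤ g ∧ ∀ g' ∈ G, f ≤ g' → g' = g := by
  classical
  by_contra! h
  refine hG.not_covers_erase hg (hF.of_refines fun f hf => ?_)
  by_cases hfg : f ≤ g
  · obtain ⟨g', hg', hfg', hne⟩ := h f hf hfg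
    exact ⟨g', Finset.mem_erase.2 ⟨hne, hg'⟩, hfg'⟩
  · obtain ⟨g', hg', hfg'⟩ := hFG f hf
    exact ⟨g', Finset.mem_erase.2 ⟨by rintro rfl; exact hfg hfg', hg'⟩, hfg'⟩

theorem IsIrredundantCover.exists_image_eq_of_refines [DecidableEq α] (hcard : F.card ≤ G.card) :
    ∃ c : α → α, Set.InjOn c G ∧ G.image c = F ∧ ∀ g ∈ G, ∀ f ∈ F, f ≤ g ↔ f = c g := by
  choose! c hcF hcle hcuniq using fun g (hg : g ∈ G) => hG.exists_le_of_refines hF hFG hg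
  have hinj : Set.InjOn c G := fun g hg g' hg' hc =>
    hcuniq g' hg' g hg (hc ▸ hcle g hg)
  have himage : G.image c = F := Finset.eq_of_subset_of_card_le
    (Finset.image_subset_iff.2 hcF) (by rw [Finset.card_image_of_injOn hinj]; exact hcard)
  refine ⟨c, hinj, himage, fun g hg f hf => ⟨fun hfg => ?_, fun hfc => hfc ▸ hcle g hg⟩⟩
  obtain ⟨g', hg', rfl⟩ := Finset.mem_image.1 (himage ▸ hf)
  rw [hcuniq g' hg' g hg hfg]

end Refinement

theorem LowerContinuous.sup_iInf_eq (hlc : LowerContinuous α) {ι : Type*} [Nonempty ι]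
    {f : ι → α} (hf : Directed (· ≥ ·) f) (a : α) : a ⊔ ⨅ i, f i = ⨅ i, a ⊔ f i := by
  rw [← sInf_range, hlc a _ (Set.range_nonempty f) (directedOn_range.2 hf), iInf_range]

theorem LowerContinuous.iInf_sup_le (hlc : LowerContinuous α) {ι : Type*} [Nonempty ι]
    {u v : ι → α} (h : ∀ i j, ∃ k, u k ≤ u i ∧ u k ≤ u j ∧ v k ≤ v i ∧ v k ≤ v j) :
    ⨅ i, (u i ⊔ v i) ≤ (⨅ i, u i) ⊔ ⨅ i, v i := by
  have hu : Directed (· ≥ ·) u := fun i j =>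
    let ⟨k, h₁, h₂, _⟩ := h i j
    ⟨k, h₁, h₂⟩
  have hv : Directed (· ≥ ·) v := fun i j =>
    let ⟨k, _, _, h₃, h₄⟩ := h i j
    ⟨k, h₃, h₄⟩
  rw [hlc.sup_iInf_eq hv]
  refine le_iInf fun j => ?_
  rw [sup_comm, hlc.sup_iInf_eq hu]
  refine le_iInf fun i => ?_
  obtain ⟨k, h₁, -, -, h₄⟩ := h i j
  exact (iInf_le _ k).trans (sup_le (le_sup_of_le_right h₁) (le_sup_of_le_left h₄))

theorem LowerContinuous.iInf_finset_sup_le (hlc : LowerContinuous α) {ι β : Type*} [Nonempty ι]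
    (w : ι → β → α) (B : Finset β) (h : ∀ i j, ∃ k, ∀ b ∈ B, w k b ≤ w i b ∧ w k b ≤ w j b) :
    ⨅ i, B.sup (w i) ≤ B.sup fun b => ⨅ i, w i b := by
  classical
  induction B using Finset.induction_on with
  | empty => simp
  | insert a B _ ih =>
    simp only [Finset.sup_insert]
    refine (hlc.iInf_sup_le fun i j => ?_).trans (sup_le_sup_left (ih fun i j => ?_) _)
    · obtain ⟨k, hk⟩ := h i j
      have hkB b (hb : b ∈ B) := hk b (Finset.mem_insert_of_mem hb)
      exact ⟨k, (hk a (Finset.mem_insert_self a B)).1, (hk a (Finset.mem_insert_self a B)).2,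
        Finset.sup_mono_fun fun b hb => (hkB b hb).1, Finset.sup_mono_fun fun b hb => (hkB b hb).2⟩
    · obtain ⟨k, hk⟩ := h i j
      exact ⟨k, fun b hb => hk b (Finset.mem_insert_of_mem hb)⟩

theorem Refines.total_of_isChain {C : Set (Finset α)} (hC : IsChain Refines C)
    (hF : F ∈ C) (hG : G ∈ C) : Refines F G ∨ Refines G F := by
  obtain rfl | hne := eq_or_ne F G
  · exact Or.inl (Refines.refl F)
  · exact hC hF hG hne

theorem LowerContinuous.exists_covers_refines_chain (hlc : LowerContinuous α)
    (hG : IsIrredundantCover p G) {S : Set (Finset α)} (hSne : S.Nonempty)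
    (hS : ∀ F ∈ S, Covers p F ∧ Refines F G ∧ F.card ≤ G.card) (hchain : IsChain Refines S) :
    ∃ D, Covers p D ∧ ∀ F ∈ S, Refines D F := by
  classical
  choose! c hcinj hcimage hcle using fun F (hF : F ∈ S) =>
    hG.exists_image_eq_of_refines (hS F hF).1 (hS F hF).2.1 (hS F hF).2.2
  have hcmem : ∀ F ∈ S, ∀ g ∈ G, c F g ∈ F := fun F hF g hg =>
    (hcimage F hF).subset (Finset.mem_image_of_mem (c F) hg)
  have hmono : ∀ F ∈ S, ∀ F' ∈ S, Refines F F' → ∀ g ∈ G, c F g ≤ c F' g := by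
    intro F hF F' hF' hFF' g hg
    obtain ⟨x, hx, hcx⟩ := hFF' _ (hcmem F hF g hg)
    obtain ⟨g', hg', hxg'⟩ := (hS F' hF').2.1 x hx
    have hgg' : g = g' := hcinj F hF hg hg'
      ((hcle F hF g' hg' _ (hcmem F hF g hg)).1 (hcx.trans hxg'))
    exact hcx.trans ((hcle F' hF' g hg x hx).1 (hgg' ▸ hxg')).le
  have : Nonempty S := hSne.to_subtype
  refine ⟨G.image fun g => ⨅ F : S, c F g, ?_, fun F hF x hx => ?_⟩
  · have hcov : p ≤ ⨅ F : S, G.sup (c F) := le_iInf fun F => by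
      have hF := (hS F F.2).1
      rwa [Covers, ← hcimage F F.2, Finset.sup_image] at hF
    refine (hcov.trans (hlc.iInf_finset_sup_le (fun F : S => c F) G fun F F' => ?_)).trans
      (by rw [Finset.sup_image]; rfl)
    rcases Refines.total_of_isChain hchain F.2 F'.2 with h | h
    · exact ⟨F, fun g hg => ⟨le_rfl, hmono F F.2 F' F'.2 h g hg⟩⟩
    · exact ⟨F', fun g hg => ⟨hmono F' F'.2 F F.2 h g hg, le_rfl⟩⟩
  · obtain ⟨g, hg, rfl⟩ := Finset.mem_image.1 hx
    exact ⟨c F g, hcmem F hF g hg, iInf_le_of_le ⟨F, hF⟩ le_rfl⟩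

theorem exists_isIrredundantCover_refines_chain {n : ℕ} (hdist : NDistributive n α)
    (hlc : LowerContinuous α) (hp : SupIrred p) {C : Set (Finset α)} (hCne : C.Nonempty)
    (hC : ∀ F ∈ C, IsIrredundantCover p F) (hchain : IsChain Refines C) :
    ∃ D, IsIrredundantCover p D ∧ ∀ F ∈ C, Refines D F := by
  have hbdd : BddAbove (Finset.card '' C) :=
    ⟨n, Set.forall_mem_image.2 fun F hF => (hC F hF).card_le hdist hp⟩
  obtain ⟨G, hGC, hGcard⟩ := Nat.sSup_mem (hCne.image _) hbdd
  have hcard : ∀ F ∈ C, F.card ≤ G.card := fun F hF =>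
    hGcard ▸ le_csSup hbdd (Set.mem_image_of_mem _ hF)
  obtain ⟨D, hD, hDS⟩ := hlc.exists_covers_refines_chain (hC G hGC) (S := {F ∈ C | Refines F G})
    ⟨G, hGC, Refines.refl G⟩ (fun F hF => ⟨(hC F hF.1).prop, hF.2, hcard F hF.1⟩)
    (hchain.mono fun _ hF => hF.1)
  obtain ⟨D', hD'D, hD'⟩ := hD.exists_isIrredundantCover_subset
  refine ⟨D', hD', fun F hF => (Refines.of_subset hD'D).trans ?_⟩
  rcases Refines.total_of_isChain hchain hF hGC with h | h
  · exact hDS F ⟨hF, h⟩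
  · exact (hDS G ⟨hGC, Refines.refl G⟩).trans h

theorem IsIrredundantCover.minCovers (hF : IsIrredundantCover p F)
    (hmax : ∀ X, IsIrredundantCover p X → Refines X F → Refines F X) : MinCovers p F := by
  refine ⟨hF.1, fun X hX hXF => ?_⟩
  obtain ⟨X', hX'X, hX'⟩ := hX.exists_isIrredundantCover_subset
  have hX'F : Refines X' F := (Refines.of_subset hX'X).trans hXF
  exact ((hmax X' hX' hX'F).subset_of_isAntichain hX'F hF.isAntichain).trans hX'X

end CoverTheory

theorem stmt12_general {α : Type*} [CompleteLattice α] (n : ℕ)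
    (hdist : ∀ (x : α) (y : Fin (n + 1) → α),
      x ⊓ (⨆ i, y i) = ⨆ i : Fin (n + 1), (x ⊓ ⨆ j ∈ ({i}ᶜ : Finset (Fin (n + 1))), y j))
    (hlc : LowerContinuous α)
    (p : α) (hp : SupIrred p) (E : Finset α) (hE : Covers p E) :
    ∃ F : Finset α, MinCovers p F ∧ Refines F E := by
  let P := {F : Finset α // IsIrredundantCover p F ∧ Refines F E}
  obtain ⟨E', hE'E, hE'⟩ := hE.exists_isIrredundantCover_subset
  have : Nonempty P := ⟨⟨E', hE', Refines.of_subset hE'E⟩⟩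
  have hbound : ∀ c : Set P, IsChain (fun F G : P => Refines G.1 F.1) c → c.Nonempty →
      ∃ D : P, ∀ F ∈ c, Refines D.1 F.1 := by
    rintro c hc ⟨F₀, hF₀⟩
    obtain ⟨D, hD, hDc⟩ := exists_isIrredundantCover_refines_chain hdist hlc hp
      (C := Subtype.val '' c) ⟨F₀.1, F₀, hF₀, rfl⟩ (fun _ ⟨F, _, hF⟩ => hF ▸ F.2.1)
      (hc.symm.image_of_map_rel _ Refines Subtype.val fun _ _ h => h)
    exact ⟨⟨D, hD, (hDc F₀.1 ⟨F₀, hF₀, rfl⟩).trans F₀.2.2⟩, fun F hF => hDc F.1 ⟨F, hF, rfl⟩⟩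
  obtain ⟨⟨M, hM, hME⟩, hmax⟩ :=
    exists_maximal_of_nonempty_chains_bounded hbound fun h₁ h₂ => h₂.trans h₁
  exact ⟨M, hM.minCovers fun X hX hXM => hmax ⟨X, hX, hXM.trans hME⟩ hXM, hME⟩

/-- Let `n ≥ 1` and let `p` be a join-irreducible element in a complete, lower
continuous, `n`-distributive lattice. Then every finite join-cover of `p` can be
refined to a minimal join-cover of `p`. -/
theorem stmt12 {α : Type*} [CompleteLattice α] (n : ℕ) (hn : 0 < n)
    (hdist : ∀ (x : α) (y : Fin (n + 1) → α),
      x ⊓ (⨆ i, y i) = ⨆ i : Fin (n + 1), (x ⊓ ⨆ j ∈ ({i}ᶜ : Finset (Fin (n + 1))), y j))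
    (hlc : LowerContinuous α)
    (p : α) (hp : SupIrred p) (E : Finset α) (hE : Covers p E) :
    ∃ F : Finset α, MinCovers p F ∧ Refines F E :=
  stmt12_general n hdist hlc p hp E hE
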